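/- Let T = K[x,y,z] be ℤ²-graded with deg(x) = e₁, deg(y) = −e₁, deg(z) = e₂, and let S = T/((xy−1)z²) with the induced grading. Then the image of z in S is relevant (since z² = xyz² in S), but z is not the image under T → S of any relevant element of T. -/

import Mathlib

open MvPolynomial

/-- A homogeneous element `f` of a ring with pieces indexed by `D` is *relevant* if some
power `f^n` (`n ≥ 1`) factors into homogeneous elements whose degrees generate a
finite-index subgroup of `D`. -/
def Relevant {D A : Type*} [AddCommGroup D] [CommRing A]
    (𝒜 : D → AddSubgroup A) (f : A) : Prop :=
  (∃ d, f ∈ 𝒜 d) ∧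
    ∃ n : ℕ, 1 ≤ n ∧ ∃ (ℓ : ℕ) (g : Fin ℓ → A) (e : Fin ℓ → D),
      (∀ i, g i ∈ 𝒜 (e i)) ∧ f ^ n = ∏ i, g i ∧
      (AddSubgroup.closure (Set.range e)).FiniteIndex

noncomputable section

variable (K : Type*) [Field K]

/-- The weights: `deg x = e₁`, `deg y = -e₁`, `deg z = e₂`, the variables `x, y, z`
being `X 0, X 1, X 2` of `T = K[x,y,z]`. -/
def w12 : Fin 3 → ℤ × ℤ := ![(1, 0), (-1, 0), (0, 1)]

/-- The `ℤ²`-grading on `T = K[x,y,z]`. -/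
def gradingT (d : ℤ × ℤ) : AddSubgroup (MvPolynomial (Fin 3) K) :=
  (weightedHomogeneousSubmodule K (w12) d).toAddSubgroup

/-- The ideal `((xy - 1)z²)`; its generator is homogeneous of degree `2e₂`. -/
abbrev I12 : Ideal (MvPolynomial (Fin 3) K) :=
  Ideal.span {(X 0 * X 1 - 1) * X 2 ^ 2}

/-- The ring `S = T/((xy - 1)z²)`. -/
abbrev Ring12 := MvPolynomial (Fin 3) K ⧸ I12 K

/-- The induced `ℤ²`-grading on `S`. -/
def gradingS (d : ℤ × ℤ) : AddSubgroup (Ring12 K) :=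
  AddSubgroup.map (Ideal.Quotient.mk (I12 K)).toAddMonoidHom (gradingT K d)

end

/-! In `S` one has `z² = xyz²`, a product of homogeneous elements of degrees `e₁, -e₁, e₂, e₂`,
which generate `ℤ²`. A homogeneous lift `t = z + z²(xy - 1)h` of `z` has `z`-coefficient `1`,
hence degree `e₂`; since the second coordinate of the degree of a monomial is its `z`-exponent,
the part divisible by `z²` vanishes and `t = z`. Finally, every homogeneous factor of `zⁿ` is a
monomial `c zᵏ`, so the degrees of a factorization of `zⁿ` lie in `ℤe₂`, of infinite index. -/

lemma weight_w12 (m : Fin 3 →₀ ℕ) :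
    Finsupp.weight w12 m = ((m 0 : ℤ) - m 1, (m 2 : ℤ)) := by
  simp [Finsupp.weight_eq_sum, Fin.sum_univ_three, w12, Prod.ext_iff]
  omega

namespace MvPolynomial

variable {σ R M : Type*}

lemma coeff_X_pow_mul_eq_zero [CommSemiring R] {i : σ} {k : ℕ} {m : σ →₀ ℕ} (hm : m i < k)
    (p : MvPolynomial σ R) : coeff m (X i ^ k * p) = 0 := by
  classical
  rw [X_pow_eq_monomial, coeff_monomial_mul', if_neg]
  intro h
  simpa using (h i).trans_lt hm

lemma exists_weight_eq_of_dvd_monomial [CommRing R] [IsDomain R] [AddCommMonoid M]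
    {w : σ → M} {g : MvPolynomial σ R} {d : M} {n : σ →₀ ℕ} {a : R}
    (hg : g.IsWeightedHomogeneous w d) (hg0 : g ≠ 0) (ha : a ≠ 0)
    (hdvd : g ∣ monomial n a) : ∃ m ≤ n, Finsupp.weight w m = d := by
  obtain ⟨m, b, hmn, -, rfl⟩ := (dvd_monomial_iff_exists ha).1 hdvd
  have hb : b ≠ 0 := by rintro rfl; simp at hg0
  exact ⟨m, hmn, (isWeightedHomogeneous_monomial w m b rfl).inj_right hg0 hg⟩

end MvPolynomial

lemma AddSubgroup.not_finiteIndex_of_le_ker {G H : Type*} [AddGroup G] [AddGroup H] [Infinite H]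
    {f : G →+ H} (hf : Function.Surjective f) {A : AddSubgroup G} (hA : A ≤ f.ker) :
    ¬ A.FiniteIndex := by
  intro hA_fin
  have h := (finiteIndex_of_le hA).index_ne_zero
  rw [index_ker, AddMonoidHom.range_eq_top.2 hf] at h
  simp at h

lemma AddSubgroup.eq_top_of_mem_int_prod {A : AddSubgroup (ℤ × ℤ)} (h₁ : ((1, 0) : ℤ × ℤ) ∈ A)
    (h₂ : ((0, 1) : ℤ × ℤ) ∈ A) : A = ⊤ := by
  refine eq_top_iff.2 fun ⟨a, b⟩ _ => ?_
  simpa [Prod.ext_iff] using A.add_mem (A.zsmul_mem h₁ a) (A.zsmul_mem h₂ b)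

section

variable {K : Type*} [Field K]

lemma X_mem_gradingT (i : Fin 3) : (X i : MvPolynomial (Fin 3) K) ∈ gradingT K (w12 i) :=
  isWeightedHomogeneous_X K w12 i

lemma fst_eq_zero_of_dvd_X_two_pow {g : MvPolynomial (Fin 3) K} {d : ℤ × ℤ} {n : ℕ}
    (hg : g ∈ gradingT K d) (hg0 : g ≠ 0) (hdvd : g ∣ X 2 ^ n) : d.1 = 0 := by
  rw [X_pow_eq_monomial] at hdvd
  obtain ⟨m, hmn, rfl⟩ := exists_weight_eq_of_dvd_monomial hg hg0 one_ne_zero hdvd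
  have h₀ := hmn 0
  have h₁ := hmn 1
  simp at h₀ h₁
  simp [weight_w12, h₀, h₁]

lemma not_relevant_X_two : ¬ Relevant (gradingT K) (X 2) := by
  rintro ⟨-, n, -, ℓ, g, e, hg, hprod, hfin⟩
  have hne : ∏ i, g i ≠ 0 := hprod ▸ pow_ne_zero n (X_ne_zero 2)
  refine AddSubgroup.not_finiteIndex_of_le_ker (f := AddMonoidHom.fst ℤ ℤ)
    Prod.fst_surjective ?_ hfin
  rw [AddSubgroup.closure_le]
  rintro _ ⟨i, rfl⟩
  exact fst_eq_zero_of_dvd_X_two_pow (hg i) (Finset.prod_ne_zero_iff.1 hne i (Finset.mem_univ i))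
    (hprod ▸ Finset.dvd_prod_of_mem g (Finset.mem_univ i))

lemma eq_X_two_of_mk_eq {t : MvPolynomial (Fin 3) K} {d : ℤ × ℤ} (ht : t ∈ gradingT K d)
    (hmk : Ideal.Quotient.mk (I12 K) t = Ideal.Quotient.mk (I12 K) (X 2)) : t = X 2 := by
  obtain ⟨h, hh⟩ := Ideal.mem_span_singleton.1 (Ideal.Quotient.eq.1 hmk)
  set q := t - X 2
  have hq : q = X 2 ^ 2 * ((X 0 * X 1 - 1) * h) := by rw [hh]; ring
  have hcoeff : ∀ m, m 2 < 2 → coeff m q = 0 := fun m hm => hq ▸ coeff_X_pow_mul_eq_zero hm _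
  have hd : d = (0, 1) := by
    have : coeff (Finsupp.single 2 1) t ≠ 0 := by
      have := hcoeff (Finsupp.single 2 1) (by simp)
      simp [q, coeff_X, sub_eq_zero] at this
      simp [this]
    simpa [weight_w12] using (ht this).symm
  rw [← sub_eq_zero]
  by_contra hq0
  obtain ⟨m, hm⟩ := ne_zero_iff.1 hq0
  have hm2 : 2 ≤ m 2 := by by_contra! hlt; exact hm (hcoeff m hlt)
  have hmt : coeff m t ≠ 0 := by
    have : m ≠ Finsupp.single 2 1 := fun h => by simp [h] at hm2
    simpa [q, coeff_X, Ne.symm this] using hm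
  have := congrArg Prod.snd (ht hmt)
  simp [weight_w12, hd] at this
  omega

lemma mk_X_mem_gradingS (i : Fin 3) :
    Ideal.Quotient.mk (I12 K) (X i) ∈ gradingS K (w12 i) :=
  AddSubgroup.mem_map_of_mem _ (X_mem_gradingT i)

lemma relevant_mk_X_two : Relevant (gradingS K) (Ideal.Quotient.mk (I12 K) (X 2)) := by
  let j : Fin 4 → Fin 3 := ![0, 1, 2, 2]
  refine ⟨⟨_, mk_X_mem_gradingS 2⟩, 2, one_le_two, 4,
    fun i => Ideal.Quotient.mk (I12 K) (X (j i)), fun i => w12 (j i),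
    fun i => mk_X_mem_gradingS (j i), ?_, ?_⟩
  · rw [Fin.prod_univ_four, ← map_pow, ← map_mul, ← map_mul, ← map_mul, Ideal.Quotient.eq,
      Ideal.mem_span_singleton]
    exact ⟨-1, by simp [j]; ring⟩
  · have htop : AddSubgroup.closure (Set.range fun i => w12 (j i)) = ⊤ :=
      AddSubgroup.eq_top_of_mem_int_prod (AddSubgroup.subset_closure ⟨0, rfl⟩)
        (AddSubgroup.subset_closure ⟨2, rfl⟩)
    rw [htop]
    infer_instance

end

theorem stmt_12 (K : Type*) [Field K] :
    Relevant (gradingS K) (Ideal.Quotient.mk (I12 K) (X 2)) ∧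
      ∀ t : MvPolynomial (Fin 3) K, Relevant (gradingT K) t →
        Ideal.Quotient.mk (I12 K) t ≠ Ideal.Quotient.mk (I12 K) (X 2) := by
  refine ⟨relevant_mk_X_two, fun t ht hmk => ?_⟩
  obtain rfl := eq_X_two_of_mk_eq ht.1.choose_spec hmk
  exact not_relevant_X_two ht
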